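/- arXiv:2309.06349 — 5 statements merged into one kernel-verified Lean document; each statement's English description precedes it below -/
import Mathlib

section
/- Let α ∈ (0,1), let ν and μ be probability measures on a measurable space with ν ≪ μ, and let X be a real-valued measurable function such that ∫ e^{(α−1)X} dν and ∫ e^{αX} dμ are finite and positive. Then (α−1)·D_α(ν‖μ) ≤ α·log ∫ e^{(α−1)X} dν + (1−α)·log ∫ e^{αX} dμ; equivalently, D_α(ν‖μ) ≥ (α/(α−1))·log ∫ e^{(α−1)X} dν − log ∫ e^{αX} dμ. -/
/-!
Write `f = dν/dμ`. Since `e^{(α-1)αX} · e^{α(1-α)X} = 1`, we have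
`f^α = (f e^{(α-1)X})^α (e^{αX})^{1-α}`, and Hölder's inequality with exponents `1/α`, `1/(1-α)`
bounds `∫ f^α dμ` by `(∫ f e^{(α-1)X} dμ)^α (∫ e^{αX} dμ)^{1-α}`; the first factor is
`∫ e^{(α-1)X} dν`. Taking logarithms and multiplying by `(α-1)⁻¹ < 0` gives both inequalities.
-/

open MeasureTheory Real
open scoped ENNReal

namespace MeasureTheory.Measure

variable {Ω : Type*} [MeasurableSpace Ω] {μ ν : Measure Ω} {α : ℝ}

theorem lintegral_rnDeriv_rpow_le [ν.HaveLebesgueDecomposition μ] (hac : ν ≪ μ)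
    (hα0 : 0 ≤ α) (hα1 : α ≤ 1) {g h : Ω → ℝ≥0∞} (hg : AEMeasurable g μ)
    (hh : AEMeasurable h μ) (hgh : ∀ᵐ ω ∂μ, 1 ≤ g ω ^ α * h ω ^ (1 - α)) :
    ∫⁻ ω, ν.rnDeriv μ ω ^ α ∂μ ≤ (∫⁻ ω, g ω ∂ν) ^ α * (∫⁻ ω, h ω ∂μ) ^ (1 - α) :=
  calc ∫⁻ ω, ν.rnDeriv μ ω ^ α ∂μ
      ≤ ∫⁻ ω, (ν.rnDeriv μ ω * g ω) ^ α * h ω ^ (1 - α) ∂μ := by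
        refine lintegral_mono_ae ?_
        filter_upwards [hgh] with ω hω
        rw [ENNReal.mul_rpow_of_nonneg _ _ hα0, mul_assoc]
        exact le_mul_of_one_le_right' hω
    _ ≤ (∫⁻ ω, ν.rnDeriv μ ω * g ω ∂μ) ^ α * (∫⁻ ω, h ω ∂μ) ^ (1 - α) :=
        ENNReal.lintegral_mul_norm_pow_le ((measurable_rnDeriv ν μ).aemeasurable.mul hg) hh
          hα0 (by linarith) (by ring)
    _ = (∫⁻ ω, g ω ∂ν) ^ α * (∫⁻ ω, h ω ∂μ) ^ (1 - α) := by
        rw [lintegral_rnDeriv_mul hac hg]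

theorem lintegral_rnDeriv_rpow_lt_top [IsFiniteMeasure μ] [IsFiniteMeasure ν] (hac : ν ≪ μ)
    (hα0 : 0 ≤ α) (hα1 : α ≤ 1) : ∫⁻ ω, ν.rnDeriv μ ω ^ α ∂μ < ∞ := by
  have hle := lintegral_rnDeriv_rpow_le hac hα0 hα1 (g := fun _ ↦ 1) (h := fun _ ↦ 1)
    aemeasurable_const aemeasurable_const (.of_forall fun _ ↦ by simp)
  simp only [lintegral_const, one_mul] at hle
  refine hle.trans_lt (ENNReal.mul_lt_top ?_ ?_) <;>
    exact ENNReal.rpow_lt_top_of_nonneg (by linarith) (measure_ne_top _ _)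

theorem lintegral_rnDeriv_rpow_ne_zero [ν.HaveLebesgueDecomposition μ] [NeZero ν]
    (hac : ν ≪ μ) (hα : 0 < α) : ∫⁻ ω, ν.rnDeriv μ ω ^ α ∂μ ≠ 0 := by
  intro h0
  rw [lintegral_eq_zero_iff ((measurable_rnDeriv ν μ).pow_const α)] at h0
  have hf0 : ν.rnDeriv μ =ᵐ[μ] 0 := by
    filter_upwards [h0] with ω hω
    simpa [ENNReal.rpow_eq_zero_iff, hα, not_lt_of_gt hα] using hω
  have := lintegral_rnDeriv hac
  rw [lintegral_congr_ae hf0, Pi.zero_def, lintegral_zero, eq_comm, measure_univ_eq_zero] at this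
  exact NeZero.ne ν this

theorem integral_toReal_rnDeriv_rpow [SigmaFinite ν] (hα : 0 ≤ α) :
    ∫ ω, (ν.rnDeriv μ ω).toReal ^ α ∂μ = (∫⁻ ω, ν.rnDeriv μ ω ^ α ∂μ).toReal := by
  rw [← integral_toReal ((measurable_rnDeriv ν μ).pow_const α).aemeasurable
    ((rnDeriv_lt_top ν μ).mono fun ω hω ↦ ENNReal.rpow_lt_top_of_nonneg hα hω.ne)]
  simp only [ENNReal.toReal_rpow]

theorem integral_rnDeriv_rpow_pos [IsFiniteMeasure μ] [IsFiniteMeasure ν] [NeZero ν]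
    (hac : ν ≪ μ) (hα0 : 0 < α) (hα1 : α ≤ 1) :
    0 < ∫ ω, (ν.rnDeriv μ ω).toReal ^ α ∂μ := by
  rw [integral_toReal_rnDeriv_rpow hα0.le]
  exact ENNReal.toReal_pos (lintegral_rnDeriv_rpow_ne_zero hac hα0)
    (lintegral_rnDeriv_rpow_lt_top hac hα0.le hα1).ne

theorem integral_rnDeriv_rpow_le_integral_exp_mul [IsFiniteMeasure μ] [IsFiniteMeasure ν]
    (hac : ν ≪ μ) (hα0 : 0 ≤ α) (hα1 : α ≤ 1) {X : Ω → ℝ} (hX : Measurable X)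
    (hIntν : Integrable (fun ω ↦ exp ((α - 1) * X ω)) ν)
    (hIntμ : Integrable (fun ω ↦ exp (α * X ω)) μ) :
    ∫ ω, (ν.rnDeriv μ ω).toReal ^ α ∂μ ≤
      (∫ ω, exp ((α - 1) * X ω) ∂ν) ^ α * (∫ ω, exp (α * X ω) ∂μ) ^ (1 - α) := by
  have hexp_one (ω : Ω) :
      ENNReal.ofReal (exp ((α - 1) * X ω)) ^ α * ENNReal.ofReal (exp (α * X ω)) ^ (1 - α) = 1 := by
    rw [ENNReal.ofReal_rpow_of_pos (exp_pos _), ENNReal.ofReal_rpow_of_pos (exp_pos _),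
      ← exp_mul, ← exp_mul, ← ENNReal.ofReal_mul (exp_pos _).le, ← exp_add,
      show (α - 1) * X ω * α + α * X ω * (1 - α) = 0 by ring, exp_zero, ENNReal.ofReal_one]
  have hholder := lintegral_rnDeriv_rpow_le hac hα0 hα1 (by fun_prop) (by fun_prop)
    (.of_forall fun ω ↦ (hexp_one ω).ge)
  rw [← ofReal_integral_eq_lintegral_ofReal hIntν (.of_forall fun _ ↦ (exp_pos _).le),
    ← ofReal_integral_eq_lintegral_ofReal hIntμ (.of_forall fun _ ↦ (exp_pos _).le)] at hholder
  calc ∫ ω, (ν.rnDeriv μ ω).toReal ^ α ∂μ = (∫⁻ ω, ν.rnDeriv μ ω ^ α ∂μ).toReal :=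
        integral_toReal_rnDeriv_rpow hα0
    _ ≤ _ := ENNReal.toReal_mono (by finiteness) hholder
    _ = _ := by
        rw [ENNReal.toReal_mul, ← ENNReal.toReal_rpow, ← ENNReal.toReal_rpow,
          ENNReal.toReal_ofReal (integral_nonneg fun _ ↦ (exp_pos _).le),
          ENNReal.toReal_ofReal (integral_nonneg fun _ ↦ (exp_pos _).le)]

end MeasureTheory.Measure

open MeasureTheory.Measure in
theorem renyi_variational_lower_bound_general
    {Ω : Type*} [MeasurableSpace Ω]
    (α : ℝ) (hα : α ∈ Set.Ioo (0 : ℝ) 1)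
    (μ ν : Measure Ω) [IsProbabilityMeasure μ] [IsProbabilityMeasure ν]
    (hac : ν ≪ μ)
    (X : Ω → ℝ) (hX : Measurable X)
    (hIntν : Integrable (fun ω => Real.exp ((α - 1) * X ω)) ν)
    (hIntμ : Integrable (fun ω => Real.exp (α * X ω)) μ) :
    (α - 1) * ((α - 1)⁻¹ * Real.log (∫ ω, (ν.rnDeriv μ ω).toReal ^ α ∂μ)) ≤
      α * Real.log (∫ ω, Real.exp ((α - 1) * X ω) ∂ν) +
        (1 - α) * Real.log (∫ ω, Real.exp (α * X ω) ∂μ) ∧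
    (α / (α - 1)) * Real.log (∫ ω, Real.exp ((α - 1) * X ω) ∂ν) -
        Real.log (∫ ω, Real.exp (α * X ω) ∂μ) ≤
      (α - 1)⁻¹ * Real.log (∫ ω, (ν.rnDeriv μ ω).toReal ^ α ∂μ) := by
  obtain ⟨hα0, hα1⟩ := hα
  have hA := integral_exp_pos hIntν
  have hB := integral_exp_pos hIntμ
  have hlog : log (∫ ω, (ν.rnDeriv μ ω).toReal ^ α ∂μ) ≤
      α * log (∫ ω, exp ((α - 1) * X ω) ∂ν) + (1 - α) * log (∫ ω, exp (α * X ω) ∂μ) := by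
    calc _ ≤ log ((∫ ω, exp ((α - 1) * X ω) ∂ν) ^ α * (∫ ω, exp (α * X ω) ∂μ) ^ (1 - α)) :=
          log_le_log (integral_rnDeriv_rpow_pos hac hα0 hα1.le)
            (integral_rnDeriv_rpow_le_integral_exp_mul hac hα0.le hα1.le hX hIntν hIntμ)
      _ = _ := by rw [log_mul (by positivity) (by positivity), log_rpow hA, log_rpow hB]
  refine ⟨by rwa [← mul_assoc, mul_inv_cancel₀ (by linarith), one_mul], ?_⟩
  calc α / (α - 1) * log (∫ ω, exp ((α - 1) * X ω) ∂ν) - log (∫ ω, exp (α * X ω) ∂μ)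
      = (α - 1)⁻¹ * (α * log (∫ ω, exp ((α - 1) * X ω) ∂ν) +
          (1 - α) * log (∫ ω, exp (α * X ω) ∂μ)) := by
        field_simp [show α - 1 ≠ 0 by linarith]
        ring
    _ ≤ _ := mul_le_mul_of_nonpos_left hlog (inv_nonpos.2 (by linarith))

/-- Variational lower bound for the Rényi divergence: for `α ∈ (0,1)`,
probability measures `ν ≪ μ` and a measurable function `X` with finite positive
exponential integrals,
`(α−1)·D_α(ν‖μ) ≤ α·log ∫ e^{(α−1)X} dν + (1−α)·log ∫ e^{αX} dμ`; equivalently,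
`D_α(ν‖μ) ≥ (α/(α−1))·log ∫ e^{(α−1)X} dν − log ∫ e^{αX} dμ`, where
`D_α(ν‖μ) = (α−1)⁻¹ log ∫ (dν/dμ)^α dμ`. -/
theorem renyi_variational_lower_bound
    {Ω : Type*} [MeasurableSpace Ω]
    (α : ℝ) (hα : α ∈ Set.Ioo (0 : ℝ) 1)
    (μ ν : Measure Ω) [IsProbabilityMeasure μ] [IsProbabilityMeasure ν]
    (hac : ν ≪ μ)
    (X : Ω → ℝ) (hX : Measurable X)
    (hIntν : Integrable (fun ω => Real.exp ((α - 1) * X ω)) ν)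
    (hIntμ : Integrable (fun ω => Real.exp (α * X ω)) μ)
    (hposν : 0 < ∫ ω, Real.exp ((α - 1) * X ω) ∂ν)
    (hposμ : 0 < ∫ ω, Real.exp (α * X ω) ∂μ) :
    (α - 1) * ((α - 1)⁻¹ * Real.log (∫ ω, (ν.rnDeriv μ ω).toReal ^ α ∂μ)) ≤
      α * Real.log (∫ ω, Real.exp ((α - 1) * X ω) ∂ν) +
        (1 - α) * Real.log (∫ ω, Real.exp (α * X ω) ∂μ) ∧
    (α / (α - 1)) * Real.log (∫ ω, Real.exp ((α - 1) * X ω) ∂ν) -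
        Real.log (∫ ω, Real.exp (α * X ω) ∂μ) ≤
      (α - 1)⁻¹ * Real.log (∫ ω, (ν.rnDeriv μ ω).toReal ^ α ∂μ) :=
  renyi_variational_lower_bound_general α hα μ ν hac X hX hIntν hIntμ
end

section
/- Let α ∈ (0,1), m > 0, C_g > 0, and let A : ℝ → ℝ be differentiable. Suppose A is strongly convex with parameter m, i.e. for all γ ∈ (0,1) and x, y ∈ ℝ, γA(x) + (1−γ)A(y) − A(γx + (1−γ)y) ≥ (1/2)γ(1−γ)m(x−y)², and suppose A′ is C_g-Lipschitz, i.e. |A′(x) − A′(y)| ≤ C_g|x−y| for all x, y. Define D_α(θ, θ₀) := (1−α)⁻¹(αA(θ) + (1−α)A(θ₀) − A(αθ + (1−α)θ₀)). Then for all θ, θ₀ ∈ ℝ, |A′(θ) − A′(θ₀)| ≤ (C_g/√m) · √((2/α)·D_α(θ, θ₀)). -/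
open Real

/-- For a differentiable function `A` that is `m`-strongly convex and has `C_g`-Lipschitz
derivative, the difference of "means" `|A′(θ) − A′(θ₀)|` is bounded via the Rényi-type
quantity `D_α(θ,θ₀) = (1−α)⁻¹(αA(θ) + (1−α)A(θ₀) − A(αθ + (1−α)θ₀))`:
`|A′(θ) − A′(θ₀)| ≤ (C_g/√m)·√((2/α)·D_α(θ,θ₀))`. -/
theorem mean_diff_le_renyi_exponential_family
    (α m Cg : ℝ) (hα : α ∈ Set.Ioo (0 : ℝ) 1) (hm : 0 < m) (hCg : 0 < Cg)
    (A : ℝ → ℝ) (hA : Differentiable ℝ A)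
    (hstrong : ∀ γ ∈ Set.Ioo (0 : ℝ) 1, ∀ x y : ℝ,
      (1 / 2) * γ * (1 - γ) * m * (x - y) ^ 2 ≤
        γ * A x + (1 - γ) * A y - A (γ * x + (1 - γ) * y))
    (hlip : ∀ x y : ℝ, |deriv A x - deriv A y| ≤ Cg * |x - y|) :
    ∀ θ θ₀ : ℝ,
      |deriv A θ - deriv A θ₀| ≤
        (Cg / Real.sqrt m) *
          Real.sqrt ((2 / α) *
            ((1 - α)⁻¹ * (α * A θ + (1 - α) * A θ₀ - A (α * θ + (1 - α) * θ₀)))) := by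
  intro θ θ₀
  obtain ⟨hα0, hα1⟩ := hα
  have h1α : (0:ℝ) < 1 - α := by linarith
  have hkey := hstrong α ⟨hα0, hα1⟩ θ θ₀
  set D := (1 - α)⁻¹ * (α * A θ + (1 - α) * A θ₀ - A (α * θ + (1 - α) * θ₀)) with hD
  have hD1 : (1 / 2) * α * m * (θ - θ₀) ^ 2 ≤ D := by
    rw [hD, le_inv_mul_iff₀ h1α]
    nlinarith
  have hD2 : m * (θ - θ₀) ^ 2 ≤ (2 / α) * D := by
    rw [div_mul_eq_mul_div, le_div_iff₀ hα0]
    nlinarith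
  have hsq : Real.sqrt (m * (θ - θ₀) ^ 2) ≤ Real.sqrt ((2 / α) * D) :=
    Real.sqrt_le_sqrt hD2
  have hsm : Real.sqrt (m * (θ - θ₀) ^ 2) = Real.sqrt m * |θ - θ₀| := by
    rw [Real.sqrt_mul hm.le, Real.sqrt_sq_eq_abs]
  have hsm0 : (0:ℝ) < Real.sqrt m := Real.sqrt_pos.mpr hm
  calc |deriv A θ - deriv A θ₀| ≤ Cg * |θ - θ₀| := hlip θ θ₀
    _ = (Cg / Real.sqrt m) * (Real.sqrt m * |θ - θ₀|) := by field_simp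
    _ ≤ (Cg / Real.sqrt m) * Real.sqrt ((2 / α) * D) := by
        apply mul_le_mul_of_nonneg_left _ (by positivity)
        rw [← hsm]; exact hsq
end

section
/- Let ν be a σ-finite measure on ℝ and consider a one-dimensional exponential family with densities p(x|θ) = exp(xθ − A(θ) + C(x)) for θ ∈ ℝ, where the log-partition function A is differentiable with C_g-Lipschitz derivative for some C_g > 0. Let Π be a probability measure on ℝ with a continuous, strictly positive density φ with respect to Lebesgue measure, fix θ₀ ∈ ℝ, and set C_φ := min_{|θ−θ₀| ≤ 1} φ(θ); assume C_φ² ≤ C_g. Fix α ∈ (0,1) and M ∈ (0,1], and define ε_n² := C_g · log(Mn)/(C_φ² · n). Then there exists n₀ ∈ ℕ such that for all n ≥ n₀, Π({θ : D_2(θ₀, θ) ≤ ε_n²}) ≥ 4^{1+α} · exp(−(C_φ²/C_g) · n · ε_n²) ≥ 4^{1+α} · exp(−n ε_n²), where D_2(θ₀, θ) := log ∫ p(x|θ₀)² p(x|θ)^{−1} dν(x). -/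
open MeasureTheory Real

/-- Mean-value-type bound for a function with Lipschitz derivative. -/
lemma taylor_like_aux (A : ℝ → ℝ) (hdiff : Differentiable ℝ A) (Cg : ℝ) (hCg : 0 ≤ Cg)
    (hlip : ∀ u v : ℝ, |deriv A u - deriv A v| ≤ Cg * |u - v|) (u v : ℝ) :
    A v - A u - deriv A u * (v - u) ≤ Cg * (v - u) ^ 2 := by
  rcases lt_trichotomy u v with h | h | h
  · obtain ⟨c, hc, hder⟩ := exists_deriv_eq_slope A h (hdiff.continuous.continuousOn)
      (hdiff.differentiableOn)
    have hvu : v - u ≠ 0 := by intro h'; nlinarith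
    have hAv : A v - A u = deriv A c * (v - u) := by
      field_simp at hder; linarith
    have h1 : A v - A u - deriv A u * (v - u) = (deriv A c - deriv A u) * (v - u) := by
      rw [hAv]; ring
    have h2 : |deriv A c - deriv A u| ≤ Cg * |c - u| := hlip c u
    have hcu : |c - u| ≤ |v - u| := by
      rw [abs_of_pos (by linarith [hc.1] : (0:ℝ) < c - u),
        abs_of_pos (by linarith : (0:ℝ) < v - u)]
      linarith [hc.2]
    calc A v - A u - deriv A u * (v - u) = (deriv A c - deriv A u) * (v - u) := h1
      _ ≤ |(deriv A c - deriv A u) * (v - u)| := le_abs_self _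
      _ = |deriv A c - deriv A u| * |v - u| := abs_mul _ _
      _ ≤ (Cg * |v - u|) * |v - u| := by
          apply mul_le_mul_of_nonneg_right _ (abs_nonneg _)
          exact h2.trans (mul_le_mul_of_nonneg_left hcu hCg)
      _ = Cg * (v - u) ^ 2 := by rw [mul_assoc, abs_mul_abs_self]; ring
  · subst h; simp
  · obtain ⟨c, hc, hder⟩ := exists_deriv_eq_slope A h (hdiff.continuous.continuousOn)
      (hdiff.differentiableOn)
    have hvu : u - v ≠ 0 := by intro h'; nlinarith
    have hAv : A v - A u = deriv A c * (v - u) := by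
      field_simp at hder; linarith
    have h1 : A v - A u - deriv A u * (v - u) = (deriv A c - deriv A u) * (v - u) := by
      rw [hAv]; ring
    have h2 : |deriv A c - deriv A u| ≤ Cg * |c - u| := hlip c u
    have hcu : |c - u| ≤ |v - u| := by
      rw [abs_of_neg (by linarith [hc.2] : c - u < 0),
        abs_of_neg (by linarith : v - u < 0)]
      linarith [hc.1]
    calc A v - A u - deriv A u * (v - u) = (deriv A c - deriv A u) * (v - u) := h1
      _ ≤ |(deriv A c - deriv A u) * (v - u)| := le_abs_self _
      _ = |deriv A c - deriv A u| * |v - u| := abs_mul _ _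
      _ ≤ (Cg * |v - u|) * |v - u| := by
          apply mul_le_mul_of_nonneg_right _ (abs_nonneg _)
          exact h2.trans (mul_le_mul_of_nonneg_left hcu hCg)
      _ = Cg * (v - u) ^ 2 := by rw [mul_assoc, abs_mul_abs_self]; ring

set_option maxHeartbeats 1000000 in
/-- Prior-mass (prior thickness) condition for a one-dimensional exponential family
`p(x|θ) = exp(xθ − A(θ) + C(x))` whose log-partition function `A` has a `C_g`-Lipschitz
derivative, and a prior `Π` with continuous strictly positive Lebesgue density `φ`.
With `C_φ = min_{|θ−θ₀|≤1} φ(θ)`, `C_φ² ≤ C_g`, and `ε_n² = C_g log(Mn)/(C_φ² n)`, there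
is `n₀` such that for all `n ≥ n₀`,
`Π({θ : D₂(θ₀,θ) ≤ ε_n²}) ≥ 4^{1+α} exp(−(C_φ²/C_g) n ε_n²) ≥ 4^{1+α} exp(−n ε_n²)`. -/
theorem exponential_family_prior_mass
    (ν : Measure ℝ) [SigmaFinite ν]
    (C : ℝ → ℝ) (hC : Measurable C) (A : ℝ → ℝ)
    (hInt : ∀ θ : ℝ, Integrable (fun x => Real.exp (x * θ + C x)) ν)
    (hA : ∀ θ : ℝ, Real.exp (A θ) = ∫ x, Real.exp (x * θ + C x) ∂ν)
    (Cg : ℝ) (hCg : 0 < Cg)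
    (hdiff : Differentiable ℝ A)
    (hlip : ∀ u v : ℝ, |deriv A u - deriv A v| ≤ Cg * |u - v|)
    (prior : Measure ℝ) [IsProbabilityMeasure prior]
    (φ : ℝ → ℝ) (hφcont : Continuous φ) (hφpos : ∀ θ, 0 < φ θ)
    (hprior : prior = volume.withDensity (fun θ => ENNReal.ofReal (φ θ)))
    (θ₀ : ℝ) (Cφ : ℝ)
    (hCφ : Cφ = sInf (φ '' Set.Icc (θ₀ - 1) (θ₀ + 1)))
    (hCφCg : Cφ ^ 2 ≤ Cg)
    (α : ℝ) (hα : α ∈ Set.Ioo (0 : ℝ) 1)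
    (M : ℝ) (hM : M ∈ Set.Ioc (0 : ℝ) 1) :
    ∃ n₀ : ℕ, ∀ n : ℕ, n₀ ≤ n →
      ENNReal.ofReal ((4 : ℝ) ^ ((1 : ℝ) + α) *
          Real.exp (-(Cφ ^ 2 / Cg) * n * (Cg * Real.log (M * n) / (Cφ ^ 2 * n)))) ≤
        prior {θ : ℝ | Real.log (∫ x, Real.exp (x * θ₀ - A θ₀ + C x) ^ 2 *
            (Real.exp (x * θ - A θ + C x))⁻¹ ∂ν) ≤ Cg * Real.log (M * n) / (Cφ ^ 2 * n)} ∧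
      (4 : ℝ) ^ ((1 : ℝ) + α) *
          Real.exp (-(n : ℝ) * (Cg * Real.log (M * n) / (Cφ ^ 2 * n))) ≤
        (4 : ℝ) ^ ((1 : ℝ) + α) *
          Real.exp (-(Cφ ^ 2 / Cg) * n * (Cg * Real.log (M * n) / (Cφ ^ 2 * n))) := by
  obtain ⟨hα0, hα1⟩ := hα
  obtain ⟨hM0, hM1⟩ := hM
  -- Positivity of Cφ and the lower bound on the interval
  have hmemθ₀ : θ₀ ∈ Set.Icc (θ₀ - 1) (θ₀ + 1) := by constructor <;> linarith
  have hne : (φ '' Set.Icc (θ₀ - 1) (θ₀ + 1)).Nonempty := ⟨φ θ₀, θ₀, hmemθ₀, rfl⟩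
  have hcomp : IsCompact (φ '' Set.Icc (θ₀ - 1) (θ₀ + 1)) :=
    isCompact_Icc.image hφcont
  have hCφ_mem : Cφ ∈ φ '' Set.Icc (θ₀ - 1) (θ₀ + 1) := hCφ ▸ hcomp.sInf_mem hne
  obtain ⟨θs, _, hθs⟩ := hCφ_mem
  have hCφpos : 0 < Cφ := hθs ▸ hφpos θs
  have hCφ_le : ∀ θ ∈ Set.Icc (θ₀ - 1) (θ₀ + 1), Cφ ≤ φ θ := fun θ hθ =>
    hCφ ▸ csInf_le hcomp.bddBelow ⟨θ, hθ, rfl⟩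
  -- Formula for the Rényi divergence
  have hD : ∀ θ : ℝ, Real.log (∫ x, Real.exp (x * θ₀ - A θ₀ + C x) ^ 2 *
      (Real.exp (x * θ - A θ + C x))⁻¹ ∂ν) = A (2 * θ₀ - θ) + A θ - 2 * A θ₀ := by
    intro θ
    have h1 : ∀ x : ℝ, Real.exp (x * θ₀ - A θ₀ + C x) ^ 2 *
        (Real.exp (x * θ - A θ + C x))⁻¹
        = Real.exp (A θ - 2 * A θ₀) * Real.exp (x * (2 * θ₀ - θ) + C x) := by
      intro x
      rw [sq, ← Real.exp_neg, ← Real.exp_add, ← Real.exp_add, ← Real.exp_add]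
      congr 1; ring
    simp only [h1]
    rw [MeasureTheory.integral_const_mul, ← hA (2 * θ₀ - θ), ← Real.exp_add, Real.log_exp]
    ring
  -- quadratic bound on the divergence
  have hD2 : ∀ θ : ℝ, A (2 * θ₀ - θ) + A θ - 2 * A θ₀ ≤ 2 * Cg * (θ - θ₀) ^ 2 := by
    intro θ
    have t1 := taylor_like_aux A hdiff Cg hCg.le hlip θ₀ θ
    have t2 := taylor_like_aux A hdiff Cg hCg.le hlip θ₀ (2 * θ₀ - θ)
    nlinarith [t1, t2]
  -- choice of n₀
  set R : ℝ := max (Real.exp 1 / M) (max ((1 / Cφ ^ 2) ^ 2) ((16 / M) ^ 2)) with hR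
  refine ⟨⌈R⌉₊, fun n hn => ?_⟩
  have hNR : R ≤ (n : ℝ) := (Nat.le_ceil R).trans (Nat.cast_le.mpr hn)
  set N : ℝ := (n : ℝ) with hNdef
  have hN0 : 0 ≤ N := Nat.cast_nonneg n
  have hexpM : Real.exp 1 / M ≤ N := le_trans (le_max_left _ _) hNR
  have hMN : Real.exp 1 ≤ M * N := by
    rw [div_le_iff₀ hM0] at hexpM; linarith
  have hMN0 : 0 < M * N := lt_of_lt_of_le (Real.exp_pos 1) hMN
  have hNpos : 0 < N := by nlinarith
  have hN1 : 1 ≤ N := by nlinarith [Real.add_one_le_exp 1]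
  set sN : ℝ := Real.sqrt N with hsNdef
  have hsN0 : 0 < sN := Real.sqrt_pos.mpr hNpos
  have hsNsq : sN * sN = N := Real.mul_self_sqrt hN0
  have hsN1 : 1 / Cφ ^ 2 ≤ sN := by
    rw [hsNdef, show (1 / Cφ ^ 2 : ℝ) = Real.sqrt ((1 / Cφ ^ 2) ^ 2) from
      (Real.sqrt_sq (by positivity)).symm]
    exact Real.sqrt_le_sqrt (le_trans (le_trans (le_max_left _ _) (le_max_right _ _)) hNR)
  have hsN2 : 16 / M ≤ sN := by
    rw [hsNdef, show (16 / M : ℝ) = Real.sqrt ((16 / M) ^ 2) from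
      (Real.sqrt_sq (by positivity)).symm]
    exact Real.sqrt_le_sqrt (le_trans (le_trans (le_max_right _ _) (le_max_right _ _)) hNR)
  set L : ℝ := Real.log (M * N) with hLdef
  have hL1 : 1 ≤ L := (Real.le_log_iff_exp_le hMN0).mpr hMN
  -- L ≤ 2 * sqrt (M*N) ≤ 2 * sN
  have hLle : L ≤ 2 * sN := by
    have h1 : Real.log (Real.sqrt (M * N)) ≤ Real.sqrt (M * N) - 1 :=
      Real.log_le_sub_one_of_pos (Real.sqrt_pos.mpr hMN0)
    have h2 : Real.log (Real.sqrt (M * N)) = L / 2 := by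
      rw [Real.log_sqrt hMN0.le]
    have h3 : Real.sqrt (M * N) ≤ sN := Real.sqrt_le_sqrt (by nlinarith)
    nlinarith
  set δ : ℝ := Real.sqrt (L / (2 * N)) / Cφ with hδdef
  have hLN0 : 0 ≤ L / (2 * N) := by positivity
  have hδ0 : 0 ≤ δ := by positivity
  have hδsq : Cφ ^ 2 * δ ^ 2 * (2 * N) = L := by
    rw [hδdef, div_pow, Real.sq_sqrt hLN0]
    field_simp
  have hδ1 : δ ≤ 1 := by
    rw [hδdef, div_le_one hCφpos]
    rw [show Cφ = Real.sqrt (Cφ ^ 2) from (Real.sqrt_sq hCφpos.le).symm]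
    apply Real.sqrt_le_sqrt
    rw [div_le_iff₀ (by positivity)]
    -- L ≤ Cφ^2 * (2*N): since L ≤ 2 sN and 1/Cφ^2 ≤ sN, so 2 sN ≤ 2 Cφ^2 sN^2 = 2 Cφ^2 N
    have h4 : 1 ≤ Cφ ^ 2 * sN := by
      rw [div_le_iff₀ (by positivity)] at hsN1; linarith
    have h5 : sN ≤ Cφ ^ 2 * N := by
      calc sN = 1 * sN := (one_mul sN).symm
        _ ≤ (Cφ ^ 2 * sN) * sN := mul_le_mul_of_nonneg_right h4 hsN0.le
        _ = Cφ ^ 2 * N := by rw [mul_assoc, hsNsq]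
    linarith
  set ε2 : ℝ := Cg * L / (Cφ ^ 2 * N) with hε2def
  have hε20 : 0 ≤ ε2 := by positivity
  -- the interval is contained in the divergence ball
  have hsub : Set.Icc (θ₀ - δ) (θ₀ + δ) ⊆
      {θ : ℝ | Real.log (∫ x, Real.exp (x * θ₀ - A θ₀ + C x) ^ 2 *
        (Real.exp (x * θ - A θ + C x))⁻¹ ∂ν) ≤ ε2} := by
    intro θ hθ
    simp only [Set.mem_setOf_eq]
    rw [hD θ]
    have h1 : (θ - θ₀) ^ 2 ≤ δ ^ 2 := by
      obtain ⟨h2, h3⟩ := hθ; nlinarith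
    have h2 : 2 * Cg * δ ^ 2 ≤ ε2 := by
      rw [hε2def]
      rw [le_div_iff₀ (by positivity)]
      have heq : 2 * Cg * δ ^ 2 * (Cφ ^ 2 * N) = Cg * L := by
        linear_combination Cg * hδsq
      linarith
    calc A (2 * θ₀ - θ) + A θ - 2 * A θ₀ ≤ 2 * Cg * (θ - θ₀) ^ 2 := hD2 θ
      _ ≤ 2 * Cg * δ ^ 2 := by nlinarith
      _ ≤ ε2 := h2
  -- lower bound for the prior mass of the interval
  have hmass : ENNReal.ofReal (Cφ * (2 * δ)) ≤ prior (Set.Icc (θ₀ - δ) (θ₀ + δ)) := by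
    rw [hprior, withDensity_apply _ measurableSet_Icc]
    have h1 : ∫⁻ x in Set.Icc (θ₀ - δ) (θ₀ + δ), ENNReal.ofReal Cφ ∂volume ≤
        ∫⁻ x in Set.Icc (θ₀ - δ) (θ₀ + δ), ENNReal.ofReal (φ x) ∂volume := by
      apply setLIntegral_mono (ENNReal.measurable_ofReal.comp hφcont.measurable)
      intro x hx
      apply ENNReal.ofReal_le_ofReal
      apply hCφ_le
      exact Set.Icc_subset_Icc (by linarith) (by linarith) hx
    refine le_trans ?_ h1
    rw [setLIntegral_const, Real.volume_Icc,
      show θ₀ + δ - (θ₀ - δ) = 2 * δ by ring,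
      ← ENNReal.ofReal_mul hCφpos.le]
  constructor
  · -- main prior-mass inequality
    have hexp_eq : -(Cφ ^ 2 / Cg) * N * ε2 = -L := by
      rw [hε2def]; field_simp
    have hkey : (4 : ℝ) ^ ((1 : ℝ) + α) * Real.exp (-(Cφ ^ 2 / Cg) * N * ε2) ≤
        Cφ * (2 * δ) := by
      rw [hexp_eq, Real.exp_neg, Real.exp_log hMN0]
      have h16 : (4 : ℝ) ^ ((1 : ℝ) + α) ≤ 16 := by
        have : (4 : ℝ) ^ ((1 : ℝ) + α) ≤ (4 : ℝ) ^ ((2 : ℝ)) :=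
          Real.rpow_le_rpow_of_exponent_le (by norm_num) (by linarith)
        rwa [show ((2 : ℝ)) = ((2 : ℕ) : ℝ) by norm_num, Real.rpow_natCast,
          show ((4 : ℝ) ^ (2 : ℕ)) = 16 by norm_num] at this
      have hMNinv : (0 : ℝ) < (M * N)⁻¹ := by positivity
      have h2 : (4 : ℝ) ^ ((1 : ℝ) + α) * (M * N)⁻¹ ≤ 16 * (M * N)⁻¹ :=
        mul_le_mul_of_nonneg_right h16 hMNinv.le
      refine h2.trans ?_
      -- 16 / (M*N) ≤ 2 * Cφ * δ = 2 * sqrt (L/(2N))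
      have hδval : Cφ * (2 * δ) = 2 * Real.sqrt (L / (2 * N)) := by
        rw [hδdef]; field_simp
      rw [hδval]
      set a : ℝ := Real.sqrt (L / (2 * N)) with hadef
      have ha0 : 0 ≤ a := Real.sqrt_nonneg _
      have ha2 : a ^ 2 * (2 * N) = L := by
        rw [hadef, Real.sq_sqrt hLN0]; field_simp
      have hMsN : 16 ≤ M * sN := by
        rw [div_le_iff₀ hM0] at hsN2; linarith
      have hMsq : (16 : ℝ) ^ 2 ≤ (M * sN) ^ 2 :=
        pow_le_pow_left₀ (by norm_num) hMsN 2
      have hM2N : 256 ≤ M ^ 2 * N := by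
        have heqq : (M * sN) ^ 2 = M ^ 2 * N := by
          rw [mul_pow, sq sN, hsNsq]
        rw [heqq] at hMsq; norm_num at hMsq; linarith
      have hx2 : 512 ≤ 2 * L * (M ^ 2 * N) := by
        have h6 := mul_le_mul_of_nonneg_right hL1
          (by positivity : (0 : ℝ) ≤ 2 * (M ^ 2 * N))
        rw [one_mul] at h6
        linarith
      have heq2 : (2 * a * (M * N)) ^ 2 = 2 * (a ^ 2 * (2 * N)) * (M ^ 2 * N) := by ring
      rw [ha2] at heq2
      have hx0 : (0 : ℝ) ≤ 2 * a * (M * N) := by positivity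
      have hx : 16 ≤ 2 * a * (M * N) := by
        by_contra hcon
        push_neg at hcon
        have h7 : (2 * a * (M * N)) * (2 * a * (M * N)) < 16 * 16 :=
          mul_lt_mul'' hcon hcon hx0 hx0
        have h8 : (2 * a * (M * N)) ^ 2 = (2 * a * (M * N)) * (2 * a * (M * N)) := sq _
        linarith
      rw [inv_eq_one_div, mul_one_div, div_le_iff₀ hMN0]
      linarith
    calc ENNReal.ofReal ((4 : ℝ) ^ ((1 : ℝ) + α) * Real.exp (-(Cφ ^ 2 / Cg) * N * ε2)) ≤
        ENNReal.ofReal (Cφ * (2 * δ)) := ENNReal.ofReal_le_ofReal hkey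
      _ ≤ prior (Set.Icc (θ₀ - δ) (θ₀ + δ)) := hmass
      _ ≤ prior _ := measure_mono hsub
  · -- comparison of the two exponentials
    apply mul_le_mul_of_nonneg_left _ (Real.rpow_nonneg (by norm_num) _)
    apply Real.exp_le_exp.mpr
    have h1 : Cφ ^ 2 / Cg ≤ 1 := by
      rw [div_le_one hCg]; exact hCφCg
    have h2 : 0 ≤ (1 - Cφ ^ 2 / Cg) * N * ε2 :=
      mul_nonneg (mul_nonneg (sub_nonneg.mpr h1) hNpos.le) hε20
    nlinarith [h2]
end

section
/- Let μ_1, …, μ_K be independent real-valued random variables on a probability space, let i*, k ∈ {1,…,K} with k ≠ i*, let y ∈ ℝ, and set p := P(μ_{i*} > y); assume p > 0. Then P( (∀ j, μ_j ≤ μ_k) and μ_k ≤ y ) ≤ ((1−p)/p) · P( μ_{i*} > y and (∀ j ≠ i*, μ_j ≤ y) ). -/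
open MeasureTheory ProbabilityTheory

/-!
If arm `k` has the largest sample and that sample is at most `y`, then every sample is at most `y`.
By independence, `P(∀ j, μ_j ≤ y) = (1 - p) q` and `P(μ_{i*} > y ∧ ∀ j ≠ i*, μ_j ≤ y) = p q` with
`q = ∏_{j ≠ i*} P(μ_j ≤ y)`: the two events differ only in the constraint on `μ_{i*}`.
-/

theorem ProbabilityTheory.iIndepFun.measureReal_iInter_preimage_update_mul
    {Ω ι : Type*} [MeasurableSpace Ω] {μ : Measure Ω} [Fintype ι] [DecidableEq ι]
    {β : ι → Type*} {m : ∀ i, MeasurableSpace (β i)} {f : ∀ i, Ω → β i}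
    (hf : iIndepFun f μ) {s : ∀ j, Set (β j)} (hs : ∀ j, MeasurableSet (s j))
    (i : ι) {a : Set (β i)} (ha : MeasurableSet a) :
    μ.real (⋂ j, f j ⁻¹' Function.update s i a j) * μ.real (f i ⁻¹' s i) =
      μ.real (⋂ j, f j ⁻¹' s j) * μ.real (f i ⁻¹' a) := by
  have hsa : ∀ j, MeasurableSet (Function.update s i a j) := fun j => by
    rcases eq_or_ne j i with rfl | hj
    · simpa using ha
    · simpa [hj] using hs j
  have hrest : ∏ j ∈ Finset.univ.erase i, μ (f j ⁻¹' Function.update s i a j) =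
      ∏ j ∈ Finset.univ.erase i, μ (f j ⁻¹' s j) :=
    Finset.prod_congr rfl fun j hj => by rw [Function.update_of_ne (Finset.ne_of_mem_erase hj)]
  simp only [measureReal_def, ← ENNReal.toReal_mul]
  rw [hf.meas_iInter fun j => ⟨_, hsa j, rfl⟩, hf.meas_iInter fun j => ⟨s j, hs j, rfl⟩,
    ← Finset.prod_erase_mul _ _ (Finset.mem_univ i),
    ← Finset.prod_erase_mul _ _ (Finset.mem_univ i), hrest, Function.update_self]
  rw [mul_right_comm]

theorem thompson_comparison_inequality_general
    {Ω : Type*} [MeasurableSpace Ω] (P : Measure Ω) [IsProbabilityMeasure P]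
    {K : ℕ} (μ : Fin K → Ω → ℝ)
    (hmeas : ∀ j, Measurable (μ j))
    (hindep : iIndepFun μ P)
    (istar k : Fin K)
    (y : ℝ) (p : ℝ)
    (hp : p = (P {ω | y < μ istar ω}).toReal) (hppos : 0 < p) :
    (P {ω | (∀ j, μ j ω ≤ μ k ω) ∧ μ k ω ≤ y}).toReal ≤
      ((1 - p) / p) *
        (P {ω | y < μ istar ω ∧ ∀ j, j ≠ istar → μ j ω ≤ y}).toReal := by
  have hsub : {ω | (∀ j, μ j ω ≤ μ k ω) ∧ μ k ω ≤ y} ⊆ ⋂ j, μ j ⁻¹' Set.Iic y :=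
    fun ω ⟨hmax, hk⟩ => Set.mem_iInter.2 fun j => (hmax j).trans hk
  have hT : {ω | y < μ istar ω ∧ ∀ j, j ≠ istar → μ j ω ≤ y} =
      ⋂ j, μ j ⁻¹' Function.update (fun _ => Set.Iic y) istar (Set.Ioi y) j := by
    ext ω
    simp only [Set.mem_iInter, Set.mem_preimage, Function.update_apply]
    constructor
    · rintro ⟨hi, hj⟩ j
      split_ifs with h
      · exact h ▸ hi
      · exact hj j h
    · intro h
      exact ⟨by simpa using h istar, fun j hj => by simpa [hj] using h j⟩
  have hcompl : P.real (μ istar ⁻¹' Set.Iic y) = 1 - p := by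
    rw [← Set.compl_Ioi, Set.preimage_compl,
      probReal_compl_eq_one_sub (hmeas istar measurableSet_Ioi), hp]
    rfl
  have hkey : P.real {ω | y < μ istar ω ∧ ∀ j, j ≠ istar → μ j ω ≤ y} * (1 - p) =
      P.real (⋂ j, μ j ⁻¹' Set.Iic y) * p := by
    rw [hT, ← hcompl, hp]
    exact hindep.measureReal_iInter_preimage_update_mul (fun _ => measurableSet_Iic) istar
      measurableSet_Ioi
  calc P.real {ω | (∀ j, μ j ω ≤ μ k ω) ∧ μ k ω ≤ y} ≤ P.real (⋂ j, μ j ⁻¹' Set.Iic y) :=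
        measureReal_mono hsub
    _ = ((1 - p) / p) * P.real {ω | y < μ istar ω ∧ ∀ j, j ≠ istar → μ j ω ≤ y} := by
        field_simp
        linarith

/-- Key comparison inequality for Thompson sampling: for independent real random
variables `μ₁,…,μ_K`, indices `k ≠ i*`, threshold `y` and
`p = P(μ_{i*} > y) > 0`, the probability that arm `k` has the largest sample while its
sample is below `y` is at most `((1−p)/p)` times the probability that `μ_{i*} > y` and
all other samples are at most `y`. -/
theorem thompson_comparison_inequality
    {Ω : Type*} [MeasurableSpace Ω] (P : Measure Ω) [IsProbabilityMeasure P]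
    {K : ℕ} (μ : Fin K → Ω → ℝ)
    (hmeas : ∀ j, Measurable (μ j))
    (hindep : iIndepFun μ P)
    (istar k : Fin K) (hne : k ≠ istar)
    (y : ℝ) (p : ℝ)
    (hp : p = (P {ω | y < μ istar ω}).toReal) (hppos : 0 < p) :
    (P {ω | (∀ j, μ j ω ≤ μ k ω) ∧ μ k ω ≤ y}).toReal ≤
      ((1 - p) / p) *
        (P {ω | y < μ istar ω ∧ ∀ j, j ≠ istar → μ j ω ≤ y}).toReal :=
  thompson_comparison_inequality_general P μ hmeas hindep istar k y p hp hppos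
end

section
/- Let K ∈ ℕ with K ≥ 3, let T ∈ ℕ with T ≥ 1, let C > 0, and let r₀ ≥ 0. Then for every Δ satisfying e·√(K·log K/(T·C)) ≤ Δ ≤ 1, one has (9(r₀+1)/(CΔ))·log(T·C·Δ²) + 27/(2CΔ) ≤ 19(r₀+1)·√(T·log K/(C·K)). -/
open Real

set_option maxHeartbeats 1000000 in
/-- Key analytic inequality for the instance-independent regret bound of α-Thompson
sampling: for `K ≥ 3`, `T ≥ 1`, `C > 0`, `r₀ ≥ 0`, and every gap `Δ` with
`e√(K log K/(TC)) ≤ Δ ≤ 1`,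
`(9(r₀+1)/(CΔ))·log(TCΔ²) + 27/(2CΔ) ≤ 19(r₀+1)·√(T log K/(CK))`. -/
theorem instance_independent_regret_key_inequality
    (K T : ℕ) (hK : 3 ≤ K) (hT : 1 ≤ T)
    (C r₀ : ℝ) (hC : 0 < C) (hr₀ : 0 ≤ r₀) :
    ∀ Δ : ℝ,
      Real.exp 1 * Real.sqrt ((K : ℝ) * Real.log K / ((T : ℝ) * C)) ≤ Δ → Δ ≤ 1 →
      (9 * (r₀ + 1) / (C * Δ)) * Real.log ((T : ℝ) * C * Δ ^ 2) + 27 / (2 * C * Δ) ≤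
        19 * (r₀ + 1) * Real.sqrt ((T : ℝ) * Real.log K / (C * K)) := by
  intro Δ hΔlo hΔhi
  have hT' : (1:ℝ) ≤ (T:ℝ) := by exact_mod_cast hT
  have hK' : (3:ℝ) ≤ (K:ℝ) := by exact_mod_cast hK
  have hKpos : (0:ℝ) < K := by linarith
  have he9 : (27/10:ℝ) < Real.exp 1 := by
    have := Real.exp_one_gt_d9
    norm_num at this ⊢
    linarith
  have hlogK : 1 ≤ Real.log K := by
    rw [Real.le_log_iff_exp_le hKpos]
    have := Real.exp_one_lt_d9
    norm_num at this
    linarith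
  have hTC : 0 < (T:ℝ) * C := by positivity
  set s := Real.sqrt ((K:ℝ) * Real.log K / ((T:ℝ)*C)) with hs_def
  have hs_pos : 0 < s := Real.sqrt_pos.mpr (by positivity)
  have hsq : s^2 = (K:ℝ) * Real.log K / ((T:ℝ)*C) :=
    Real.sq_sqrt (by positivity)
  have hsq' : (T:ℝ) * C * s^2 = (K:ℝ) * Real.log K := by
    rw [hsq]; field_simp
  have he : 0 < Real.exp 1 := Real.exp_pos 1
  have hΔpos : 0 < Δ := lt_of_lt_of_le (by positivity) hΔlo
  set x := Δ / (Real.exp 1 * s) with hx_def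
  have hx1 : 1 ≤ x := (one_le_div (by positivity)).mpr hΔlo
  have hxpos : 0 < x := by linarith
  have hΔeq : Δ = Real.exp 1 * s * x := by
    rw [hx_def]; field_simp
  clear_value x
  clear_value s
  clear hx_def hs_def
  -- rewrite the log argument
  have hA : (T:ℝ) * C * Δ^2 = Real.exp 1 ^ 2 * ((K:ℝ) * Real.log K) * x^2 := by
    rw [hΔeq]; linear_combination (Real.exp 1 ^ 2 * x ^ 2) * hsq'
  have hKlogK : (1:ℝ) ≤ (K:ℝ) * Real.log K := by nlinarith
  have hlogA : Real.log ((T:ℝ)*C*Δ^2)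
      = 2 + Real.log ((K:ℝ)*Real.log K) + 2*Real.log x := by
    rw [hA, Real.log_mul (by positivity) (by positivity),
      Real.log_mul (by positivity) (by nlinarith),
      Real.log_pow, Real.log_pow, Real.log_exp]
    push_cast; ring
  have hL2 : 0 ≤ Real.log ((K:ℝ)*Real.log K) := Real.log_nonneg hKlogK
  have key : Real.log ((T:ℝ)*C*Δ^2) ≤ (2 + Real.log ((K:ℝ)*Real.log K)) * x := by
    rw [hlogA]
    nlinarith [Real.log_le_sub_one_of_pos hxpos]
  have hloglog : Real.log ((K:ℝ)*Real.log K) ≤ 2 * Real.log K := by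
    rw [Real.log_mul (by positivity) (by linarith)]
    have := Real.log_le_sub_one_of_pos (show (0:ℝ) < Real.log K by linarith)
    linarith
  -- rewrite the sqrt on the RHS
  have hR : Real.sqrt ((T:ℝ) * Real.log K / (C * (K:ℝ))) = Real.log K / (C * s) := by
    rw [show (T:ℝ) * Real.log K / (C * (K:ℝ)) = (Real.log K / (C * s))^2 from ?_,
      Real.sqrt_sq (by positivity)]
    rw [div_pow, mul_pow, hsq]
    field_simp
  -- main inequality after clearing denominators
  have hmain : 9*(r₀+1)*Real.log ((T:ℝ)*C*Δ^2) + 27/2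
      ≤ 19*(r₀+1)*Real.log K * (Real.exp 1 * x) := by
    have he27 : (27/10:ℝ) ≤ Real.exp 1 := le_of_lt he9
    have h1 : Real.log ((T:ℝ)*C*Δ^2) ≤ (2 + 2*Real.log K) * x := by
      refine key.trans (mul_le_mul_of_nonneg_right ?_ (by linarith))
      linarith
    have h2 : 9*(r₀+1)*Real.log ((T:ℝ)*C*Δ^2) ≤ 9*(r₀+1)*((2 + 2*Real.log K)*x) := by
      have := mul_le_mul_of_nonneg_left h1 (show (0:ℝ) ≤ 9*(r₀+1) by linarith)
      linarith
    have hA1 : (0:ℝ) ≤ ((r₀+1)*Real.log K*x) * (Real.exp 1 - 27/10) := by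
      apply mul_nonneg
      · positivity
      · linarith
    have hA2 : (0:ℝ) ≤ ((r₀+1)*x) * (Real.log K - 1) := by
      apply mul_nonneg
      · positivity
      · linarith
    have hA3 : (0:ℝ) ≤ r₀ * x := by positivity
    have h3 : 9*(r₀+1)*((2 + 2*Real.log K)*x) + 27/2
        ≤ 19*(r₀+1)*Real.log K * (Real.exp 1 * x) := by
      nlinarith [hA1, hA2, hA3, hx1]
    linarith
  -- convert to the stated goal
  rw [hR]
  have hCΔ : 0 < C * Δ := by positivity
  have hLHS : 9 * (r₀ + 1) / (C * Δ) * Real.log ((T:ℝ) * C * Δ ^ 2) + 27 / (2 * C * Δ)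
      = (9*(r₀+1)*Real.log ((T:ℝ)*C*Δ^2) + 27/2) / (C * Δ) := by
    field_simp
  have hRHS : 19 * (r₀ + 1) * (Real.log K / (C * s))
      = (19*(r₀+1)*Real.log K * (Real.exp 1 * x)) / (C * Δ) := by
    rw [hΔeq]; field_simp
  rw [hLHS, hRHS]
  gcongr
end
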